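/- arXiv:math/0212091 — 4 statements merged into one kernel-verified Lean document; each statement's English description precedes it below -/
import Mathlib

section
/- Let K be a number field with ring of integers O. If an element x of the ring of algebraic integers satisfies x - 1 ∈ p for prime ideals p of infinitely many distinct residue characteristics, then x = 1. -/
set_option maxHeartbeats 1000000 in
set_option synthInstance.maxHeartbeats 400000 in
/-- An algebraic integer `x` such that `x - 1` lies in prime ideals of infinitely many
distinct residue characteristics must equal `1`. -/
theorem stmt_0 (x : integralClosure ℤ (AlgebraicClosure ℚ))
    (h : {ℓ : ℕ | ℓ.Prime ∧ ∃ p : Ideal (integralClosure ℤ (AlgebraicClosure ℚ)),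
        p.IsPrime ∧ (ℓ : integralClosure ℤ (AlgebraicClosure ℚ)) ∈ p ∧ x - 1 ∈ p}.Infinite) :
    x = 1 := by
  by_contra hx
  have hy0 : x - 1 ≠ 0 := sub_ne_zero.mpr hx
  have hint : IsIntegral ℤ (x - 1) := IsIntegralClosure.isIntegral ℤ (AlgebraicClosure ℚ) (x - 1)
  set c : ℤ := (minpoly ℤ (x - 1)).coeff 0 with hc
  -- the constant coefficient of the minimal polynomial is nonzero
  have hc0 : c ≠ 0 := by
    intro hczero
    obtain ⟨q, hq⟩ := (Polynomial.X_dvd_iff).mpr hczero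
    rcases (minpoly.irreducible hint).isUnit_or_isUnit hq with hu | hu
    · exact Polynomial.not_isUnit_X hu
    · obtain ⟨r, -, hr⟩ := Polynomial.isUnit_iff.mp hu
      have hmon := minpoly.monic hint
      rw [hq, ← hr] at hmon
      have hr1 : r = 1 := by
        have := hmon.leadingCoeff
        rwa [mul_comm, Polynomial.leadingCoeff_C_mul_X] at this
      have hX : minpoly ℤ (x - 1) = Polynomial.X := by
        rw [hq, ← hr, hr1]; simp
      have := minpoly.aeval ℤ (x - 1)
      rw [hX] at this
      simp at this
      exact hy0 this
  -- each ℓ in the set divides c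
  have hdvd : ∀ ℓ ∈ {ℓ : ℕ | ℓ.Prime ∧ ∃ p : Ideal (integralClosure ℤ (AlgebraicClosure ℚ)),
      p.IsPrime ∧ (ℓ : integralClosure ℤ (AlgebraicClosure ℚ)) ∈ p ∧ x - 1 ∈ p},
      (ℓ : ℤ) ∣ c := by
    rintro ℓ ⟨hℓ, p, hp, hℓp, hyp⟩
    have hcp : algebraMap ℤ (integralClosure ℤ (AlgebraicClosure ℚ)) c ∈ p := by
      have h0 : (Polynomial.aeval (x - 1)) (minpoly ℤ (x - 1)) = 0 := minpoly.aeval ℤ (x - 1)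
      have hsplit := (minpoly ℤ (x - 1)).X_mul_divX_add
      have h1 : (x - 1) * (Polynomial.aeval (x - 1)) (minpoly ℤ (x - 1)).divX
          + algebraMap ℤ (integralClosure ℤ (AlgebraicClosure ℚ)) c = 0 := by
        rw [hc]
        calc (x - 1) * (Polynomial.aeval (x - 1)) (minpoly ℤ (x - 1)).divX
              + algebraMap ℤ (integralClosure ℤ (AlgebraicClosure ℚ))
                ((minpoly ℤ (x - 1)).coeff 0)
            = (Polynomial.aeval (x - 1)) (Polynomial.X * (minpoly ℤ (x - 1)).divX
              + Polynomial.C ((minpoly ℤ (x - 1)).coeff 0)) := by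
              simp only [map_add, map_mul, Polynomial.aeval_X, Polynomial.aeval_C]
          _ = 0 := by rw [hsplit, h0]
      have h2 : algebraMap ℤ (integralClosure ℤ (AlgebraicClosure ℚ)) c
          = -((x - 1) * (Polynomial.aeval (x - 1)) (minpoly ℤ (x - 1)).divX) := by
        linear_combination h1
      rw [h2]
      exact neg_mem (Ideal.mul_mem_right _ p hyp)
    by_contra hndvd
    have hcop : IsCoprime (ℓ : ℤ) c :=
      ((Nat.prime_iff_prime_int.mp hℓ).coprime_iff_not_dvd).mpr hndvd
    obtain ⟨a, b, hab⟩ := hcop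
    have : (1 : integralClosure ℤ (AlgebraicClosure ℚ)) ∈ p := by
      have := congrArg (algebraMap ℤ (integralClosure ℤ (AlgebraicClosure ℚ))) hab
      simp only [map_add, map_mul, map_one] at this
      rw [← this]
      exact Ideal.add_mem p (Ideal.mul_mem_left p _ (by simpa using hℓp))
        (Ideal.mul_mem_left p _ hcp)
    exact hp.ne_top (Ideal.eq_top_iff_one p |>.mpr this)
  -- contradiction: infinitely many primes divide the nonzero integer c
  have hfin : {ℓ : ℕ | ℓ.Prime ∧ ∃ p : Ideal (integralClosure ℤ (AlgebraicClosure ℚ)),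
      p.IsPrime ∧ (ℓ : integralClosure ℤ (AlgebraicClosure ℚ)) ∈ p ∧ x - 1 ∈ p}.Finite := by
    apply (Set.finite_Iic c.natAbs).subset
    intro ℓ hℓ
    have : (ℓ : ℤ) ∣ c := hdvd ℓ hℓ
    have : ℓ ∣ c.natAbs := by
      have h2 := Int.natAbs_dvd_natAbs.mpr this
      simpa using h2
    exact Nat.le_of_dvd (Int.natAbs_pos.mpr hc0) this
  exact h hfin
end

section
/- Let G be a group, k a field, ε, χ : G → k^× characters with ε nontrivial, and suppose ρ : G → GL₂(k) is an upper-triangular representation of the form ρ(g) = [[ε(g)χ(g), ν(g)], [0, χ(g)]] whose extension class is nonzero, i.e. ρ is not semisimple (not conjugate to the diagonal representation εχ ⊕ χ). If moreover ε² is nontrivial and ε ≠ the trivial character, then H⁰(G, ε ⊗ ad⁰ρ) = 0. -/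
/-- For a non-split upper-triangular representation `ρ = [[εχ, ν],[0, χ]]` with `ε` and `ε²`
nontrivial, the twisted trace-zero adjoint `ε ⊗ ad⁰ρ` has no nonzero `G`-invariants. -/
theorem stmt_6 {G k : Type*} [Group G] [Field k]
    (ε χ : G →* kˣ) (ν : G → k)
    (ρ : G → Matrix (Fin 2) (Fin 2) k)
    (hρ : ∀ g, ρ g = !![(ε g : k) * (χ g : k), ν g; 0, (χ g : k)])
    (hmul : ∀ g h : G, ρ (g * h) = ρ g * ρ h)
    (hnonsplit : ¬ ∃ P : Matrix.GeneralLinearGroup (Fin 2) k,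
        ∀ g, (P : Matrix (Fin 2) (Fin 2) k) * ρ g * (↑(P⁻¹) : Matrix (Fin 2) (Fin 2) k)
          = Matrix.diagonal ![(ε g : k) * (χ g : k), (χ g : k)])
    (hε : ∃ g, ε g ≠ 1) (hε2 : ∃ g, (ε g) ^ 2 ≠ 1) :
    ∀ M : Matrix (Fin 2) (Fin 2) k, M.trace = 0 →
      (∀ g : G, (ε g : k) • (ρ g * M * ρ g⁻¹) = M) → M = 0 := by
  intro M htr hinv
  have hν1 : ν 1 = 0 := by
    have h := hmul 1 1
    rw [mul_one, hρ 1] at h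
    have h01 := congrArg (fun m => m 0 1) h
    simpa [Matrix.mul_apply, Fin.sum_univ_two] using h01
  have hρ1 : ρ 1 = 1 := by
    rw [hρ 1, hν1]
    simp [Matrix.one_fin_two]
  have key : ∀ g : G, (ε g : k) • (ρ g * M) = M * ρ g := by
    intro g
    have hinvρ : ρ g⁻¹ * ρ g = 1 := by
      rw [← hmul, inv_mul_cancel, hρ1]
    have h := congrArg (· * ρ g) (hinv g)
    rwa [smul_mul_assoc, mul_assoc (ρ g * M), hinvρ, mul_one] at h
  set a := M 0 0 with ha
  set b := M 0 1 with hb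
  set c := M 1 0 with hc
  set d := M 1 1 with hd
  have htr' : d = -a := by
    rw [Matrix.trace_fin_two] at htr
    linear_combination htr
  have E00 : ∀ g : G, (ε g : k) * ((ε g : k) * (χ g : k) * a + ν g * c)
      = a * ((ε g : k) * (χ g : k)) := by
    intro g
    have h := key g
    rw [hρ g] at h
    have := congrArg (fun m => m 0 0) h
    simpa [Matrix.mul_apply, Matrix.vecMul, dotProduct,
      Fin.sum_univ_two] using this
  have E01 : ∀ g : G, (ε g : k) * ((ε g : k) * (χ g : k) * b + ν g * d)
      = a * ν g + b * (χ g : k) := by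
    intro g
    have h := key g
    rw [hρ g] at h
    have := congrArg (fun m => m 0 1) h
    simpa [Matrix.mul_apply, Matrix.vecMul, dotProduct,
      Fin.sum_univ_two] using this
  have hεχ : ∀ g : G, (ε g : k) ≠ 0 := fun g => (ε g).ne_zero
  have hχ : ∀ g : G, (χ g : k) ≠ 0 := fun g => (χ g).ne_zero
  have R : ∀ g : G, ν g * c = a * (χ g : k) * (1 - (ε g : k)) := by
    intro g
    have h2 : (ε g : k) * (ν g * c) = (ε g : k) * (a * (χ g : k) * (1 - (ε g : k))) := by
      linear_combination E00 g
    exact mul_left_cancel₀ (hεχ g) h2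
  by_cases hc0 : c = 0
  · obtain ⟨g0, hg0⟩ := hε
    have hg0' : (ε g0 : k) ≠ 1 := fun h => hg0 (Units.ext h)
    have ha0 : a = 0 := by
      have h' : a * ((ε g0 : k) * (χ g0 : k)) * ((ε g0 : k) - 1) = 0 := by
        linear_combination E00 g0 - (ε g0 : k) * (ν g0) * hc0
      rcases mul_eq_zero.1 h' with h'' | h''
      · rcases mul_eq_zero.1 h'' with h3 | h3
        · exact h3
        · exact absurd h3 (mul_ne_zero (hεχ g0) (hχ g0))
      · exact absurd (by linear_combination h'') hg0'
    have hd0 : d = 0 := by rw [htr', ha0, neg_zero]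
    obtain ⟨g1, hg1⟩ := hε2
    have hg1' : ((ε g1 : k)) ^ 2 ≠ 1 := fun h => hg1 (Units.ext (by push_cast; exact h))
    have hb0 : b = 0 := by
      have h' : b * (χ g1 : k) * (((ε g1 : k)) ^ 2 - 1) = 0 := by
        linear_combination E01 g1 - (ε g1 : k) * (ν g1) * hd0 + ν g1 * ha0
      rcases mul_eq_zero.1 h' with h'' | h''
      · rcases mul_eq_zero.1 h'' with h3 | h3
        · exact h3
        · exact absurd h3 (hχ g1)
      · exact absurd (by linear_combination h'') hg1'
    ext i j
    fin_cases i <;> fin_cases j <;>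
      simp only [Matrix.zero_apply] <;>
      first
        | exact ha0 | exact hb0 | exact hc0 | exact hd0
  · have hP : ∀ g : G, !![(1:k), -(a/c); 0, 1] * ρ g * !![(1:k), a/c; 0, 1]
        = Matrix.diagonal ![(ε g : k) * (χ g : k), (χ g : k)] := by
      intro g
      rw [hρ g]
      have hr := R g
      ext i j
      fin_cases i <;> fin_cases j <;>
        simp [Matrix.mul_apply, Fin.sum_univ_two, Matrix.diagonal] <;>
        field_simp <;> linear_combination hr
    exact absurd ⟨⟨!![(1:k), -(a/c); 0, 1], !![(1:k), a/c; 0, 1],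
      by simp [Matrix.mul_fin_two, Matrix.one_fin_two],
      by simp [Matrix.mul_fin_two, Matrix.one_fin_two]⟩, fun g => hP g⟩ hnonsplit
end

section
/- Let O be the ring of integers of a finite extension K of ℚ_ℓ with uniformizer λ, ramification index e, and valuation v normalized by v(ℓ) = 1. Let k = 2 and suppose α, β, γ, δ ∈ O satisfy: αδ − βγ = ℓ·w for a unit w ∈ O^×, v(α) = 1, v(β) > 1, α² ≡ ℓ²·w (mod λ^{2e+1}). Then (α + δ)² ≡ w (mod λ). -/
/-!
Write `α = ϖ^e a` with `ϖ ∤ a`. Dividing the determinant relation and the congruence for `α²` by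
the appropriate powers of `ϖ` gives `a δ ≡ uℓ w` and `a² ≡ uℓ² w (mod ϖ)`, hence
`a² δ² ≡ uℓ² w² ≡ a² w`, and cancelling `a²` gives `δ² ≡ w`. Finally `ϖ ∣ α`, so
`(α + δ)² ≡ δ² (mod ϖ)`.
-/

theorem Prime.dvd_sq_sub_of_dvd_mul_sub {R : Type*} [CommRing R] {p a u δ w : R}
    (hp : Prime p) (ha : ¬ p ∣ a) (hδ : p ∣ a * δ - u * w) (hsq : p ∣ a ^ 2 - u ^ 2 * w) :
    p ∣ δ ^ 2 - w := by
  have hprod : p ∣ a ^ 2 * (δ ^ 2 - w) := by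
    have h : a ^ 2 * (δ ^ 2 - w) = (a * δ - u * w) * (a * δ + u * w) - w * (a ^ 2 - u ^ 2 * w) := by
      ring
    rw [h]
    exact dvd_sub (hδ.mul_right _) (hsq.mul_left _)
  exact (hp.dvd_mul.mp hprod).resolve_left fun h => ha (hp.dvd_of_dvd_pow h)

theorem stmt_9_general {O : Type*} [CommRing O] [IsDomain O] [IsDiscreteValuationRing O]
    (ϖ : O) (hϖ : Irreducible ϖ) (e : ℕ) (he : 1 ≤ e)
    (ℓ uℓ : O) (hℓ : ℓ = uℓ * ϖ ^ e)
    (α β γ δ w : O)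
    (hdet : α * δ - β * γ = ℓ * w)
    (hα1 : ϖ ^ e ∣ α) (hα2 : ¬ ϖ ^ (e + 1) ∣ α)
    (hβ : ϖ ^ (e + 1) ∣ β)
    (hcong : ϖ ^ (2 * e + 1) ∣ α ^ 2 - ℓ ^ 2 * w) :
    ϖ ∣ (α + δ) ^ 2 - w := by
  obtain ⟨a, rfl⟩ := hα1
  obtain ⟨b, rfl⟩ := hβ
  subst hℓ
  have ha : ¬ ϖ ∣ a := fun h => hα2 (pow_succ ϖ e ▸ mul_dvd_mul_left _ h)
  have hδ : ϖ ∣ a * δ - uℓ * w := by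
    refine (mul_dvd_mul_iff_left (pow_ne_zero e hϖ.ne_zero)).mp ⟨b * γ, ?_⟩
    linear_combination hdet
  have hsq : ϖ ∣ a ^ 2 - uℓ ^ 2 * w := by
    refine (mul_dvd_mul_iff_left (pow_ne_zero (2 * e) hϖ.ne_zero)).mp ?_
    convert hcong using 1 <;> ring
  have hδsq : ϖ ∣ δ ^ 2 - w := hϖ.prime.dvd_sq_sub_of_dvd_mul_sub ha hδ hsq
  have hα : ϖ ∣ ϖ ^ e * a := (dvd_pow_self ϖ (by omega)).mul_right a
  have h : (ϖ ^ e * a + δ) ^ 2 - w = (δ ^ 2 - w) + ϖ ^ e * a * (ϖ ^ e * a + 2 * δ) := by ring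
  rw [h]
  exact dvd_add hδsq (hα.mul_right _)

/-- The final congruence step of Proposition 4.2 for `k = 2`: in a discrete valuation ring
with uniformizer `ϖ` and `ℓ = uℓ·ϖ^e`, the hypotheses `αδ − βγ = ℓw`, `v(α) = 1`,
`v(β) > 1` and `α² ≡ ℓ²w (mod ϖ^{2e+1})` imply `(α + δ)² ≡ w (mod ϖ)`. -/
theorem stmt_9 {O : Type*} [CommRing O] [IsDomain O] [IsDiscreteValuationRing O]
    (ϖ : O) (hϖ : Irreducible ϖ) (e : ℕ) (he : 1 ≤ e)
    (ℓ uℓ : O) (huℓ : IsUnit uℓ) (hℓ : ℓ = uℓ * ϖ ^ e)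
    (α β γ δ w : O) (hw : IsUnit w)
    (hdet : α * δ - β * γ = ℓ * w)
    (hα1 : ϖ ^ e ∣ α) (hα2 : ¬ ϖ ^ (e + 1) ∣ α)
    (hβ : ϖ ^ (e + 1) ∣ β)
    (hcong : ϖ ^ (2 * e + 1) ∣ α ^ 2 - ℓ ^ 2 * w) :
    ϖ ∣ (α + δ) ^ 2 - w :=
  stmt_9_general ϖ hϖ e he ℓ uℓ hℓ α β γ δ w hdet hα1 hα2 hβ hcong
end

section
/- Let K be a field and let D be a free module of rank 2 over a commutative ring O, with a submodule filtration and a linear map structure as follows: D has basis x, y; define f₀ : D → D by f₀x = αx + βy, f₀y = γx + δy with α,β,γ,δ ∈ O. Consider the rank-one submodule D⁰ = O·(x ⊗ x ⊗ w) inside D ⊗ D ⊗ O·w, with the map F(x⊗x⊗w) = u·ℓ^{−k}·(αx+βy)⊗(αx+βy)⊗w formally scaled into O (assuming ℓ^k divides the relevant products). Then the kernel of (1 − F) on D⁰/λD⁰ is nonzero only if u·α² ≡ ℓ^k (mod λ^{ek+1}) and αβ ≡ 0 (mod λ^{ek+1}), where e is the ramification index. -/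
/-! Since `c` is a unit mod `λ`, the kernel conditions give `A ≡ 1` and `B ≡ 0 (mod λ)`;
multiplying by `ℓ^k`, which `λ^{ek}` divides, lifts them to congruences mod `λ^{ek+1}`. -/

theorem mul_dvd_sub_self_of_dvd_one_sub {R : Type*} [CommRing R] {q p a x : R}
    (hx : q * a = x) (ha : p ∣ 1 - a) : q * p ∣ x - q := by
  have : x - q = -(q * (1 - a)) := by rw [← hx]; ring
  exact this ▸ (mul_dvd_mul_left q ha).neg_right

theorem pow_mul_dvd_pow_of_eq_mul_pow {R : Type*} [CommMonoid R] {ℓ v p : R} {e : ℕ}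
    (hℓ : ℓ = v * p ^ e) (k : ℕ) : p ^ (e * k) ∣ ℓ ^ k :=
  ⟨v ^ k, by rw [hℓ, mul_pow, ← pow_mul, mul_comm]⟩

theorem stmt_15_general {O : Type*} [CommRing O] [IsDomain O] [IsDiscreteValuationRing O]
    (lam : O) (hlam : Irreducible lam) (e : ℕ) (k : ℕ)
    (ℓ vℓ : O) (hℓ : ℓ = vℓ * lam ^ e)
    (u α β : O) (hu : IsUnit u)
    (A B : O)
    (hA : ℓ ^ k * A = u * α ^ 2) (hB : ℓ ^ k * B = u * (α * β))
    (c : O) (hc : ¬ lam ∣ c)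
    (hker1 : lam ∣ c - c * A) (hker2 : lam ∣ c * B) :
    lam ^ (e * k + 1) ∣ u * α ^ 2 - ℓ ^ k ∧ lam ^ (e * k + 1) ∣ α * β := by
  have hprime : Prime lam := hlam.prime
  have hA_one : lam ∣ 1 - A :=
    (hprime.dvd_or_dvd (by rwa [mul_sub, mul_one])).resolve_left hc
  have hB_zero : lam ∣ B := (hprime.dvd_or_dvd hker2).resolve_left hc
  have hpow : lam ^ (e * k + 1) ∣ ℓ ^ k * lam :=
    pow_succ lam (e * k) ▸ mul_dvd_mul_right (pow_mul_dvd_pow_of_eq_mul_pow hℓ k) lam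
  refine ⟨hpow.trans (mul_dvd_sub_self_of_dvd_one_sub hA hA_one), ?_⟩
  exact hu.dvd_mul_left.mp (hpow.trans (hB ▸ mul_dvd_mul_left _ hB_zero))

/-- The Frobenius computation of Proposition 4.2: with `F` acting on the rank-one piece
`D⁰ = O·(x⊗x⊗w)` by `F(x⊗x⊗w) = u·ℓ^{−k}·(αx+βy)⊗(αx+βy)⊗w`, i.e. with coordinates
`A, B, C` satisfying `ℓ^k·A = u·α²`, `ℓ^k·B = u·α·β`, `ℓ^k·C = u·β²`, a nonzero element of
`ker(1 − F)` on `D⁰/λD⁰` forces `u·α² ≡ ℓ^k (mod λ^{ek+1})` and `α·β ≡ 0 (mod λ^{ek+1})`. -/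
theorem stmt_15 {O : Type*} [CommRing O] [IsDomain O] [IsDiscreteValuationRing O]
    (lam : O) (hlam : Irreducible lam) (e : ℕ) (he : 1 ≤ e) (k : ℕ) (hk : 2 ≤ k)
    (ℓ vℓ : O) (hvℓ : IsUnit vℓ) (hℓ : ℓ = vℓ * lam ^ e)
    (u α β : O) (hu : IsUnit u)
    (A B C : O)
    (hA : ℓ ^ k * A = u * α ^ 2) (hB : ℓ ^ k * B = u * (α * β)) (hC : ℓ ^ k * C = u * β ^ 2)
    (c : O) (hc : ¬ lam ∣ c)
    (hker1 : lam ∣ c - c * A) (hker2 : lam ∣ c * B) (hker3 : lam ∣ c * C) :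
    lam ^ (e * k + 1) ∣ u * α ^ 2 - ℓ ^ k ∧ lam ^ (e * k + 1) ∣ α * β :=
  stmt_15_general lam hlam e k ℓ vℓ hℓ u α β hu A B hA hB c hc hker1 hker2
end
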